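/- Let f : Bool^n → Bool be of the form f(x) = h₀(x_{Z₀}, h(h₁(x_{Z₁}),…,hₘ(x_{Zₘ}))) where Z₀,…,Zₘ partition the variables, each hᵢ (i ≥ 1) depends on all variables of Zᵢ, h depends on all its m arguments, and h₀ depends on all variables in Z₀ and on its last argument. Suppose for each i ≥ 1 there is a relevance hypercube for a nonempty subset uᵢ ⊆ Zᵢ of the function hᵢ, and there is an assignment p₀ of constants to Z₀ making h₀(·, u) equal to u or ¬u as a function of its last argument u. Then f has a relevance hypercube for u₁ ∪ … ∪ uₘ. -/

import Mathlib

/-- A Boolean function `f` depends on variable `i`. -/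
def BoolFunDependsOn {ι : Type*} (f : (ι → Bool) → Bool) (i : ι) : Prop :=
  ∃ a b : ι → Bool, (∀ j, j ≠ i → a j = b j) ∧ f a ≠ f b

/-- The projection of `f` obtained by fixing all variables outside `S`
to the values given by `p`. -/
def Restrict {n : ℕ} (f : (Fin n → Bool) → Bool) (S : Finset (Fin n))
    (p : Fin n → Bool) : (Fin n → Bool) → Bool :=
  fun x => f fun j => if j ∈ S then x j else p j

/-- `p` determines a relevance hypercube for `S`: the induced projection
depends on every variable of `S`. -/
def IsRelHypercube {n : ℕ} (f : (Fin n → Bool) → Bool) (S : Finset (Fin n))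
    (p : Fin n → Bool) : Prop :=
  ∀ i ∈ S, BoolFunDependsOn (Restrict f S p) i

/-!
The projection of `f` on `u₁ ∪ … ∪ uₘ` is assembled blockwise: on `Z₀` fix `p₀`, which turns `h₀`
into `w ↦ c xor w`, and on `Zᵢ` fix the hypercube of `hᵢ`. The projection is then
`c xor h(g₁, …, gₘ)`, where `gᵢ` is the projection of `hᵢ` on `uᵢ`. The `gᵢ` read disjoint sets of
variables and are nonconstant, so any pair of arguments of `h` witnessing its dependence on the
`i`-th argument can be realised by inputs that differ only at a variable `j ∈ uᵢ` on which `gᵢ`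
depends.
-/

open Function

section Glue

variable {ι κ β : Type*} {U : κ → Finset ι}

open Classical in
noncomputable def glue (U : κ → Finset ι) (w : κ → ι → β) (d : ι → β) : ι → β :=
  fun l => if h : ∃ k, l ∈ U k then w h.choose l else d l

theorem glue_of_mem (hU : Pairwise (Disjoint on U)) (w : κ → ι → β) (d : ι → β) {k : κ} {l : ι}
    (hl : l ∈ U k) : glue U w d l = w k l := by
  have hex : ∃ k, l ∈ U k := ⟨k, hl⟩
  have hk : hex.choose = k := by
    by_contra hne
    exact Finset.disjoint_left.mp (hU hne) hex.choose_spec hl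
  rw [glue, dif_pos hex, hk]

theorem glue_of_forall_notMem (w : κ → ι → β) (d : ι → β) {l : ι} (hl : ∀ k, l ∉ U k) :
    glue U w d l = d l := by
  rw [glue, dif_neg (not_exists.mpr hl)]

end Glue

namespace BoolFunDependsOn

variable {ι : Type*} {f : (ι → Bool) → Bool} {i : ι}

theorem exists_eq_eq (hf : BoolFunDependsOn f i) {v w : Bool} (hvw : v ≠ w) :
    ∃ a b : ι → Bool, (∀ j, j ≠ i → a j = b j) ∧ f a = v ∧ f b = w := by
  have two_values : ∀ x y z : Bool, x ≠ y → x ≠ z → y = z := by decide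
  obtain ⟨a, b, hab, hne⟩ := hf
  by_cases hav : f a = v
  · exact ⟨a, b, hab, hav, two_values v _ _ (hav ▸ hne) hvw⟩
  · exact ⟨b, a, fun j hj => (hab j hj).symm, two_values _ _ _ hne hav,
      two_values v _ _ (Ne.symm hav) hvw⟩

theorem exists_eq (hf : BoolFunDependsOn f i) (v : Bool) : ∃ a, f a = v := by
  obtain ⟨a, -, -, hav, -⟩ := hf.exists_eq_eq (Bool.not_ne_self v).symm
  exact ⟨a, hav⟩

theorem exists_ne_at (hf : BoolFunDependsOn f i) :
    ∃ a b : ι → Bool, (∀ j, j ≠ i → a j = b j) ∧ a i ≠ b i ∧ f a ≠ f b := by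
  obtain ⟨a, b, hab, hne⟩ := hf
  refine ⟨a, b, hab, fun hi => hne (congrArg f (funext fun j => ?_)), hne⟩
  by_cases hj : j = i
  · exact hj ▸ hi
  · exact hab j hj

theorem comp_injective (hf : BoolFunDependsOn f i) {φ : Bool → Bool} (hφ : Injective φ) :
    BoolFunDependsOn (fun x => φ (f x)) i := by
  obtain ⟨a, b, hab, hne⟩ := hf
  exact ⟨a, b, hab, hφ.ne hne⟩

theorem comp_of_disjoint_blocks {κ : Type*} {U : κ → Finset ι} (hU : Pairwise (Disjoint on U))
    {g : κ → (ι → Bool) → Bool} (hloc : ∀ k x y, (∀ l ∈ U k, x l = y l) → g k x = g k y)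
    (hsurj : ∀ k v, ∃ x, g k x = v) {h : (κ → Bool) → Bool} {k₀ : κ}
    (hh : BoolFunDependsOn h k₀) {j : ι} (hg : BoolFunDependsOn (g k₀) j) :
    BoolFunDependsOn (fun x => h fun k => g k x) j := by
  classical
  obtain ⟨A, B, hAB, hAB₀, hne⟩ := hh.exists_ne_at
  obtain ⟨a, b, hab, ha, hb⟩ := hg.exists_eq_eq hAB₀
  choose z hz using fun k => hsurj k (A k)
  have hglue : ∀ (c : ι → Bool) k, g k (glue U (update z k₀ c) c) = g k (update z k₀ c k) :=
    fun c k => hloc k _ _ fun l hl => glue_of_mem hU _ _ hl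
  -- Block `k₀` carries `a` (resp. `b`), every other block `k` a preimage of `A k = B k`.
  refine ⟨glue U (update z k₀ a) a, glue U (update z k₀ b) b, fun l hl => ?_, ?_⟩
  · by_cases hblock : ∃ k, l ∈ U k
    · obtain ⟨k, hk⟩ := hblock
      rw [glue_of_mem hU _ _ hk, glue_of_mem hU _ _ hk]
      by_cases hk₀ : k = k₀
      · subst hk₀; simpa using hab l hl
      · simp [hk₀]
    · push Not at hblock
      rw [glue_of_forall_notMem _ _ hblock, glue_of_forall_notMem _ _ hblock, hab l hl]
  · convert hne using 2 <;> funext k <;> rw [hglue] <;> by_cases hk₀ : k = k₀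
    · subst hk₀; simpa using ha
    · simpa [hk₀] using hz k
    · subst hk₀; simpa using hb
    · simpa [hk₀, hAB k hk₀] using hz k

end BoolFunDependsOn

theorem restrict_congr {n : ℕ} (f : (Fin n → Bool) → Bool) (S : Finset (Fin n))
    (p : Fin n → Bool) {x y : Fin n → Bool} (hxy : ∀ l ∈ S, x l = y l) :
    Restrict f S p x = Restrict f S p y := by
  refine congrArg f (funext fun l => ?_)
  by_cases hl : l ∈ S <;> simp [hl, hxy]

theorem restrict_comp_glue_eq_xor {n m : ℕ} {Z0 : Finset (Fin n)} {Z : Fin m → Finset (Fin n)}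
    (hd0 : ∀ i, Disjoint Z0 (Z i)) (hd : Pairwise (Disjoint on Z))
    {h0 : (Fin n → Bool) → Bool → Bool}
    (h0only : ∀ x y u, (∀ j ∈ Z0, x j = y j) → h0 x u = h0 y u)
    (h : (Fin m → Bool) → Bool) {hi : Fin m → (Fin n → Bool) → Bool}
    (hionly : ∀ i x y, (∀ j ∈ Z i, x j = y j) → hi i x = hi i y)
    {u : Fin m → Finset (Fin n)} (hus : ∀ i, u i ⊆ Z i)
    {p0 : Fin n → Bool} {c : Bool} (hc : ∀ w, h0 p0 w = xor c w) (pc : Fin m → Fin n → Bool)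
    (x : Fin n → Bool) :
    Restrict (fun x => h0 x (h fun i => hi i x)) (Finset.univ.biUnion u) (glue Z pc p0) x
      = xor c (h fun i => Restrict (hi i) (u i) (pc i) x) := by
  have hmem_biUnion : ∀ {i l}, l ∈ Z i → (l ∈ Finset.univ.biUnion u ↔ l ∈ u i) := by
    intro i l hl
    simp only [Finset.mem_biUnion, Finset.mem_univ, true_and]
    refine ⟨fun ⟨i', hi'⟩ => ?_, fun h => ⟨i, h⟩⟩
    obtain rfl : i' = i := by
      by_contra hne
      exact Finset.disjoint_left.mp (hd hne) (hus i' hi') hl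
    exact hi'
  have hZ0 : ∀ {l}, l ∈ Z0 → ∀ i, l ∉ Z i := fun hl i => Finset.disjoint_left.mp (hd0 i) hl
  have hp0 : ∀ l ∈ Z0, (if l ∈ Finset.univ.biUnion u then x l else glue Z pc p0 l) = p0 l := by
    intro l hl
    have hlS : l ∉ Finset.univ.biUnion u := by
      simp only [Finset.mem_biUnion, Finset.mem_univ, true_and, not_exists]
      exact fun i hli => hZ0 hl i (hus i hli)
    rw [if_neg hlS, glue_of_forall_notMem _ _ (hZ0 hl)]
  show h0 _ _ = _
  rw [h0only _ p0 _ hp0, hc]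
  refine congrArg (xor c ∘ h) (funext fun i => hionly i _ _ fun l hl => ?_)
  by_cases hlu : l ∈ u i
  · simp [(hmem_biUnion hl).mpr hlu, hlu]
  · simp [mt (hmem_biUnion hl).mp hlu, hlu, glue_of_mem hd _ _ hl]

theorem stmt15_general {n m : ℕ}
    (Z0 : Finset (Fin n)) (Z : Fin m → Finset (Fin n))
    (hd0 : ∀ i, Disjoint Z0 (Z i))
    (hd : ∀ i j, i ≠ j → Disjoint (Z i) (Z j))
    (h0 : (Fin n → Bool) → Bool → Bool)
    (h0only : ∀ x y u, (∀ j ∈ Z0, x j = y j) → h0 x u = h0 y u)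
    (h : (Fin m → Bool) → Bool) (hdep : ∀ i, BoolFunDependsOn h i)
    (hi : Fin m → (Fin n → Bool) → Bool)
    (hionly : ∀ i x y, (∀ j ∈ Z i, x j = y j) → hi i x = hi i y)
    (u : Fin m → Finset (Fin n))
    (hus : ∀ i, u i ⊆ Z i) (hune : ∀ i, (u i).Nonempty)
    (huh : ∀ i, ∃ p, IsRelHypercube (hi i) (u i) p)
    (hp0 : ∃ p0 : Fin n → Bool, ∃ c : Bool, ∀ w : Bool, h0 p0 w = xor c w) :
    ∃ p, IsRelHypercube (fun x => h0 x (h fun i => hi i x))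
      (Finset.univ.biUnion u) p := by
  obtain ⟨p0, c, hc⟩ := hp0
  choose pc hpc using huh
  have hZ : Pairwise (Disjoint on Z) := fun i j hij => hd i j hij
  have hu : Pairwise (Disjoint on u) := hZ.mono fun i j hij => hij.mono (hus i) (hus j)
  have hsurj : ∀ i v, ∃ x, Restrict (hi i) (u i) (pc i) x = v := fun i =>
    have ⟨j, hj⟩ := hune i
    (hpc i j hj).exists_eq
  refine ⟨glue Z pc p0, fun j hj => ?_⟩
  obtain ⟨i, -, hji⟩ := Finset.mem_biUnion.mp hj
  rw [funext (restrict_comp_glue_eq_xor hd0 hZ h0only h hionly hus hc pc)]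
  exact ((hdep i).comp_of_disjoint_blocks (g := fun i => Restrict (hi i) (u i) (pc i)) hu
    (fun i _ _ => restrict_congr _ _ _) hsurj (hpc i j hji)).comp_injective
    fun _ _ => Bool.xor_right_inj.mp

theorem stmt15 {n m : ℕ}
    (Z0 : Finset (Fin n)) (Z : Fin m → Finset (Fin n))
    (hd0 : ∀ i, Disjoint Z0 (Z i))
    (hd : ∀ i j, i ≠ j → Disjoint (Z i) (Z j))
    (hcov : Z0 ∪ Finset.univ.biUnion Z = Finset.univ)
    (h0 : (Fin n → Bool) → Bool → Bool)
    (h0only : ∀ x y u, (∀ j ∈ Z0, x j = y j) → h0 x u = h0 y u)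
    (h0dep : ∀ j ∈ Z0, ∃ u : Bool, BoolFunDependsOn (fun x => h0 x u) j)
    (h0last : ∃ x, h0 x false ≠ h0 x true)
    (h : (Fin m → Bool) → Bool) (hdep : ∀ i, BoolFunDependsOn h i)
    (hi : Fin m → (Fin n → Bool) → Bool)
    (hionly : ∀ i x y, (∀ j ∈ Z i, x j = y j) → hi i x = hi i y)
    (hidep : ∀ i, ∀ j ∈ Z i, BoolFunDependsOn (hi i) j)
    (u : Fin m → Finset (Fin n))
    (hus : ∀ i, u i ⊆ Z i) (hune : ∀ i, (u i).Nonempty)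
    (huh : ∀ i, ∃ p, IsRelHypercube (hi i) (u i) p)
    (hp0 : ∃ p0 : Fin n → Bool, ∃ c : Bool, ∀ w : Bool, h0 p0 w = xor c w) :
    ∃ p, IsRelHypercube (fun x => h0 x (h fun i => hi i x))
      (Finset.univ.biUnion u) p :=
  stmt15_general Z0 Z hd0 hd h0 h0only h hdep hi hionly u hus hune huh hp0
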